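/- Let X be a second countable Baire complex topological vector space and Γ a set of continuous linear operators on X. Then the set 𝔻C(Γ) of diskcyclic vectors for Γ is dense in X if and only if Γ is disk transitive. In this case Γ is diskcyclic and 𝔻C(Γ) is a dense Gδ subset of X. -/

import Mathlib

/-!
A vector has dense disk orbit iff its disk orbit meets every member of a countable base, so the
diskcyclic vectors form a countable intersection of open sets, each of which is dense exactly when
the family is transitive; Baire's theorem does the rest. In the transitivity condition the scalar
can always be taken nonzero: if `0 • T u ∈ V`, then `β • T u ∈ V` for all small `β ≠ 0`.
-/

open scoped Pointwise
open Set Topology TopologicalSpace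

section Universality

variable {X ι : Type*} [TopologicalSpace X]

def denseOrbitPoints (f : ι → X → X) : Set X :=
  {x | Dense (range fun i => f i x)}

def IsTopologicallyTransitiveFamily (f : ι → X → X) : Prop :=
  ∀ U V : Set X, IsOpen U → IsOpen V → U.Nonempty → V.Nonempty → ∃ i, (f i '' U ∩ V).Nonempty

variable {f : ι → X → X}

theorem denseOrbitPoints_eq_biInter {B : Set (Set X)} (hB : IsTopologicalBasis B)
    (hB₀ : ∅ ∉ B) : denseOrbitPoints f = ⋂ V ∈ B, ⋃ i, f i ⁻¹' V := by
  ext x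
  simp only [denseOrbitPoints, mem_ofPred_eq, hB.dense_iff, mem_iInter, mem_iUnion,
    mem_preimage]
  refine forall₂_congr fun V hV => ?_
  have hVne : V.Nonempty := nonempty_iff_ne_empty.2 fun h => hB₀ (h ▸ hV)
  simp only [hVne, true_imp_iff, inter_nonempty, mem_range]
  exact ⟨fun ⟨_, hy, i, hi⟩ => ⟨i, hi ▸ hy⟩, fun ⟨i, hi⟩ => ⟨_, hi, i, rfl⟩⟩

theorem isOpen_iUnion_preimage (hf : ∀ i, Continuous (f i)) {V : Set X} (hV : IsOpen V) :
    IsOpen (⋃ i, f i ⁻¹' V) :=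
  isOpen_iUnion fun i => hV.preimage (hf i)

theorem isGδ_denseOrbitPoints [SecondCountableTopology X] (hf : ∀ i, Continuous (f i)) :
    IsGδ (denseOrbitPoints f) := by
  obtain ⟨B, hBc, hB₀, hB⟩ := exists_countable_basis X
  rw [denseOrbitPoints_eq_biInter hB hB₀]
  exact .biInter hBc fun V hV => (isOpen_iUnion_preimage hf (hB.isOpen hV)).isGδ

theorem IsTopologicallyTransitiveFamily.dense_denseOrbitPoints [SecondCountableTopology X]
    [BaireSpace X] (hf : ∀ i, Continuous (f i)) (htrans : IsTopologicallyTransitiveFamily f) :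
    Dense (denseOrbitPoints f) := by
  obtain ⟨B, hBc, hB₀, hB⟩ := exists_countable_basis X
  rw [denseOrbitPoints_eq_biInter hB hB₀]
  refine dense_biInter_of_isOpen (fun V hV => isOpen_iUnion_preimage hf (hB.isOpen hV)) hBc
    fun V hV => dense_iff_inter_open.2 fun U hU hUne => ?_
  have hVne : V.Nonempty := nonempty_iff_ne_empty.2 fun h => hB₀ (h ▸ hV)
  obtain ⟨i, _, ⟨u, hu, rfl⟩, hV⟩ := htrans U V hU (hB.isOpen hV) hUne hVne
  exact ⟨u, hu, mem_iUnion.2 ⟨i, hV⟩⟩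

theorem Dense.isTopologicallyTransitiveFamily (h : Dense (denseOrbitPoints f)) :
    IsTopologicallyTransitiveFamily f := by
  intro U V hU hV hUne hVne
  obtain ⟨x, hxU, hx⟩ := h.inter_open_nonempty U hU hUne
  obtain ⟨_, hyV, i, rfl⟩ := (hx : Dense _).inter_open_nonempty V hV hVne
  exact ⟨i, f i x, mem_image_of_mem _ hxU, hyV⟩

theorem dense_denseOrbitPoints_iff [SecondCountableTopology X] [BaireSpace X]
    (hf : ∀ i, Continuous (f i)) :
    Dense (denseOrbitPoints f) ↔ IsTopologicallyTransitiveFamily f :=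
  ⟨Dense.isTopologicallyTransitiveFamily, fun h => h.dense_denseOrbitPoints hf⟩

end Universality

section Disk

variable {𝕜 X : Type*} [NontriviallyNormedField 𝕜] [AddCommMonoid X] [Module 𝕜 X]
  [TopologicalSpace X]

def diskOrbit (Γ : Set (X →L[𝕜] X)) (x : X) : Set X :=
  {y | ∃ α : 𝕜, ‖α‖ ≤ 1 ∧ ∃ T ∈ Γ, y = α • T x}

def diskCyclicVectors (Γ : Set (X →L[𝕜] X)) : Set X :=
  {x | Dense (diskOrbit Γ x)}

def IsDiskTransitive (Γ : Set (X →L[𝕜] X)) : Prop :=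
  ∀ U V : Set X, IsOpen U → IsOpen V → U.Nonempty → V.Nonempty →
    ∃ α : 𝕜, α ≠ 0 ∧ ‖α‖ ≤ 1 ∧ ∃ T ∈ Γ, (⇑T '' (α • U) ∩ V).Nonempty

def diskFamily (Γ : Set (X →L[𝕜] X)) :
    {p : 𝕜 × (X →L[𝕜] X) // ‖p.1‖ ≤ 1 ∧ p.2 ∈ Γ} → X → X :=
  fun p x => p.1.1 • p.1.2 x

theorem continuous_diskFamily [ContinuousConstSMul 𝕜 X] (Γ : Set (X →L[𝕜] X)) (p) :
    Continuous (diskFamily Γ p) :=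
  p.1.2.continuous.const_smul p.1.1

theorem denseOrbitPoints_diskFamily (Γ : Set (X →L[𝕜] X)) :
    denseOrbitPoints (diskFamily Γ) = diskCyclicVectors Γ := by
  ext x
  suffices range (fun p => diskFamily Γ p x) = diskOrbit Γ x by
    simp only [denseOrbitPoints, diskCyclicVectors, mem_ofPred_eq, this]
  ext y
  simp only [diskFamily, diskOrbit, mem_range, mem_ofPred_eq, Subtype.exists, Prod.exists,
    exists_prop, and_assoc, exists_and_left, eq_comm (a := y)]

theorem exists_ne_zero_smul_mem [ContinuousSMul 𝕜 X] {V : Set X} (hV : IsOpen V) {v : X} {α : 𝕜}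
    (hα : ‖α‖ ≤ 1) (hαv : α • v ∈ V) : ∃ β : 𝕜, β ≠ 0 ∧ ‖β‖ ≤ 1 ∧ β • v ∈ V := by
  rcases ne_or_eq α 0 with hα₀ | rfl
  · exact ⟨α, hα₀, hα, hαv⟩
  have hsmul : ∀ᶠ β in 𝓝 (0 : 𝕜), β • v ∈ V :=
    (continuous_id.smul continuous_const).continuousAt.preimage_mem_nhds (hV.mem_nhds hαv)
  have hsmall : ∀ᶠ β in 𝓝 (0 : 𝕜), ‖β‖ < 1 :=
    continuous_norm.continuousAt.eventually_lt continuousAt_const (by simp)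
  have hpunct : ∀ᶠ β in 𝓝[≠] (0 : 𝕜), (β • v ∈ V ∧ ‖β‖ < 1) ∧ β ≠ 0 :=
    ((hsmul.and hsmall).filter_mono nhdsWithin_le_nhds).and self_mem_nhdsWithin
  obtain ⟨β, ⟨hβV, hβ⟩, hβ₀⟩ := hpunct.exists
  exact ⟨β, hβ₀, hβ.le, hβV⟩

theorem isTopologicallyTransitiveFamily_diskFamily_iff [ContinuousSMul 𝕜 X]
    (Γ : Set (X →L[𝕜] X)) :
    IsTopologicallyTransitiveFamily (diskFamily Γ) ↔ IsDiskTransitive Γ := by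
  constructor
  · intro h U V hU hV hUne hVne
    obtain ⟨⟨⟨α, T⟩, hα, hT⟩, _, ⟨u, hu, rfl⟩, hαu⟩ := h U V hU hV hUne hVne
    obtain ⟨β, hβ₀, hβ, hβu⟩ := exists_ne_zero_smul_mem hV hα hαu
    exact ⟨β, hβ₀, hβ, T, hT, β • T u, ⟨β • u, smul_mem_smul_set hu, T.map_smul β u⟩, hβu⟩
  · intro h U V hU hV hUne hVne
    obtain ⟨α, -, hα, T, hT, _, ⟨_, ⟨u, hu, rfl⟩, rfl⟩, hαu⟩ := h U V hU hV hUne hVne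
    exact ⟨⟨(α, T), hα, hT⟩, _, mem_image_of_mem _ hu, by simpa [diskFamily] using hαu⟩

theorem dense_diskCyclicVectors_iff [ContinuousSMul 𝕜 X] [SecondCountableTopology X]
    [BaireSpace X] (Γ : Set (X →L[𝕜] X)) : Dense (diskCyclicVectors Γ) ↔ IsDiskTransitive Γ := by
  rw [← denseOrbitPoints_diskFamily, dense_denseOrbitPoints_iff (continuous_diskFamily Γ),
    isTopologicallyTransitiveFamily_diskFamily_iff]

theorem isGδ_diskCyclicVectors [ContinuousConstSMul 𝕜 X] [SecondCountableTopology X]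
    (Γ : Set (X →L[𝕜] X)) :
    IsGδ (diskCyclicVectors Γ) :=
  denseOrbitPoints_diskFamily Γ ▸ isGδ_denseOrbitPoints (continuous_diskFamily Γ)

end Disk

theorem stmt_7_general {X : Type*} [AddCommGroup X] [Module ℂ X] [TopologicalSpace X]
    [ContinuousSMul ℂ X] [SecondCountableTopology X]
    [BaireSpace X] (Γ : Set (X →L[ℂ] X)) :
    (Dense {x : X | Dense {y : X | ∃ α : ℂ, ‖α‖ ≤ 1 ∧ ∃ T ∈ Γ, y = α • T x}} ↔
      (∀ U V : Set X, IsOpen U → IsOpen V → U.Nonempty → V.Nonempty →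
        ∃ α : ℂ, α ≠ 0 ∧ ‖α‖ ≤ 1 ∧ ∃ T ∈ Γ, (⇑T '' (α • U) ∩ V).Nonempty)) ∧
    ((∀ U V : Set X, IsOpen U → IsOpen V → U.Nonempty → V.Nonempty →
        ∃ α : ℂ, α ≠ 0 ∧ ‖α‖ ≤ 1 ∧ ∃ T ∈ Γ, (⇑T '' (α • U) ∩ V).Nonempty) →
      (∃ x : X, Dense {y : X | ∃ α : ℂ, ‖α‖ ≤ 1 ∧ ∃ T ∈ Γ, y = α • T x}) ∧
      Dense {x : X | Dense {y : X | ∃ α : ℂ, ‖α‖ ≤ 1 ∧ ∃ T ∈ Γ, y = α • T x}} ∧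
      IsGδ {x : X | Dense {y : X | ∃ α : ℂ, ‖α‖ ≤ 1 ∧ ∃ T ∈ Γ, y = α • T x}}) := by
  have hiff := dense_diskCyclicVectors_iff Γ
  refine ⟨hiff, fun htrans => ?_⟩
  have hdense := hiff.2 htrans
  exact ⟨hdense.nonempty, hdense, isGδ_diskCyclicVectors Γ⟩

/-- On a second countable Baire complex topological vector space, the set of diskcyclic
vectors of `Γ` is dense iff `Γ` is disk transitive; in this case `Γ` is diskcyclic and
the set of diskcyclic vectors is a dense `Gδ` set. -/
theorem stmt_7 {X : Type*} [AddCommGroup X] [Module ℂ X] [TopologicalSpace X]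
    [IsTopologicalAddGroup X] [ContinuousSMul ℂ X] [SecondCountableTopology X]
    [BaireSpace X] (Γ : Set (X →L[ℂ] X)) :
    (Dense {x : X | Dense {y : X | ∃ α : ℂ, ‖α‖ ≤ 1 ∧ ∃ T ∈ Γ, y = α • T x}} ↔
      (∀ U V : Set X, IsOpen U → IsOpen V → U.Nonempty → V.Nonempty →
        ∃ α : ℂ, α ≠ 0 ∧ ‖α‖ ≤ 1 ∧ ∃ T ∈ Γ, (⇑T '' (α • U) ∩ V).Nonempty)) ∧
    ((∀ U V : Set X, IsOpen U → IsOpen V → U.Nonempty → V.Nonempty →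
        ∃ α : ℂ, α ≠ 0 ∧ ‖α‖ ≤ 1 ∧ ∃ T ∈ Γ, (⇑T '' (α • U) ∩ V).Nonempty) →
      (∃ x : X, Dense {y : X | ∃ α : ℂ, ‖α‖ ≤ 1 ∧ ∃ T ∈ Γ, y = α • T x}) ∧
      Dense {x : X | Dense {y : X | ∃ α : ℂ, ‖α‖ ≤ 1 ∧ ∃ T ∈ Γ, y = α • T x}} ∧
      IsGδ {x : X | Dense {y : X | ∃ α : ℂ, ‖α‖ ≤ 1 ∧ ∃ T ∈ Γ, y = α • T x}}) :=
  stmt_7_general Γ
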